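/- Let A be a po-semiring with Z(A) = {c, u} where c ≠ u. (i) If c and u are incomparable, then c² = c, u² = u, c·u = 0, both c and u are minimal elements and prime elements of A, and c < x and u < x for every x ∈ A with x ∉ {0, c, u}. (ii) If c < u, then c² = 0, c is the least nonzero element of A, u is a prime element of A, and u < p for every prime element p of A with p ∉ {c, u}. -/
import Mathlib


/-- A po-semiring: a commutative semiring equipped with a compatible partial order
such that 0 is the least and 1 is the greatest element. -/
class PoSemiring (A : Type*) extends CommSemiring A, PartialOrder A where
  add_right_mono : ∀ x y z : A, x ≤ y → x + z ≤ y + z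
  mul_left_mono : ∀ x y z : A, (0 : A) ≤ x → y ≤ z → x * y ≤ x * z
  zero_le_elem : ∀ x : A, (0 : A) ≤ x
  le_one_elem : ∀ x : A, x ≤ (1 : A)

/-- A maximal element of a po-semiring. -/
def IsMaximalElem {A : Type*} [PoSemiring A] (m : A) : Prop :=
  m ≠ 1 ∧ ∀ x : A, m ≤ x → x < 1 → m = x

/-- A prime element of a po-semiring. -/
def IsPrimeElem {A : Type*} [PoSemiring A] (p : A) : Prop :=
  p ≠ 1 ∧ ∀ x y : A, x * y ≤ p → x ≤ p ∨ y ≤ p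

/-- The set `Z(A)` of nonzero zero divisors of a po-semiring. -/
def zdSet (A : Type*) [PoSemiring A] : Set A :=
  {a | a ≠ 0 ∧ ∃ b : A, b ≠ 0 ∧ a * b = 0}

/-- Condition (C1): each non-nilpotent element lies above a nonzero idempotent
having an orthogonal idempotent complement. -/
def CondC1 (A : Type*) [PoSemiring A] : Prop :=
  ∀ u : A, ¬ IsNilpotent u →
    ∃ w v : A, w ≠ 0 ∧ w * w = w ∧ v * v = v ∧ w ≤ u ∧ w + v = 1 ∧ w * v = 0

/-- Condition (C2): each nonzero idempotent lies above a nonzero idempotent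
having an orthogonal idempotent complement. -/
def CondC2 (A : Type*) [PoSemiring A] : Prop :=
  ∀ u : A, u ≠ 0 → u * u = u →
    ∃ w v : A, w ≠ 0 ∧ w * w = w ∧ v * v = v ∧ w ≤ u ∧ w + v = 1 ∧ w * v = 0

/-- `A` contains no infinite set of orthogonal idempotents. -/
def NoInfiniteOrthogonalIdempotents (A : Type*) [PoSemiring A] : Prop :=
  ∀ S : Set A, (∀ e ∈ S, e ≠ 0 ∧ e * e = e) →
    (∀ e ∈ S, ∀ f ∈ S, e ≠ f → e * f = 0) → S.Finite

/-- DCC for elements: no infinite strictly descending chain. -/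
def ElemDCC (A : Type*) [PoSemiring A] : Prop :=
  ¬ ∃ f : ℕ → A, ∀ n : ℕ, f (n + 1) < f n

/-- ACC for elements: no infinite strictly ascending chain. -/
def ElemACC (A : Type*) [PoSemiring A] : Prop :=
  ¬ ∃ f : ℕ → A, ∀ n : ℕ, f n < f (n + 1)

/-- A minimal element of a po-semiring: a nonzero element with nothing strictly
between it and `0`. -/
def IsMinimalElem {A : Type*} [PoSemiring A] (e : A) : Prop :=
  e ≠ 0 ∧ ∀ y : A, 0 < y → y ≤ e → e = y

section Aux
variable {A : Type*} [PoSemiring A]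

lemma po_zero_le (x : A) : (0:A) ≤ x := PoSemiring.zero_le_elem x

lemma po_eq_zero_of_le_zero {x : A} (h : x ≤ 0) : x = 0 :=
  le_antisymm h (po_zero_le x)

lemma po_mul_le_right (x y : A) : x * y ≤ x := by
  have := PoSemiring.mul_left_mono x y 1 (po_zero_le x) (PoSemiring.le_one_elem y)
  simpa using this

lemma po_mul_le_left (x y : A) : x * y ≤ y := by
  rw [mul_comm]; exact po_mul_le_right y x

lemma po_mul_mono (x : A) {y z : A} (h : y ≤ z) : x * y ≤ x * z :=
  PoSemiring.mul_left_mono x y z (po_zero_le x) h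

lemma po_mul_eq_zero_of_le {x y z : A} (h : x ≤ y) (hz : y * z = 0) : x * z = 0 := by
  apply po_eq_zero_of_le_zero
  calc x * z = z * x := mul_comm _ _
    _ ≤ z * y := po_mul_mono z h
    _ = 0 := by rw [mul_comm]; exact hz

lemma po_le_add_self (x y : A) : x ≤ x + y := by
  have := PoSemiring.add_right_mono 0 y x (po_zero_le y)
  simpa [add_comm] using this

end Aux
lemma part1_aux {A : Type*} [PoSemiring A] (a b : A)
    (ha0 : a ≠ 0) (hb0 : b ≠ 0) (haa : a * a = a) (hbb : b * b = b) (hab : a * b = 0)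
    (hnab : ¬ a ≤ b) (hnba : ¬ b ≤ a)
    (hzd : ∀ x y : A, x ≠ 0 → y ≠ 0 → x * y = 0 → x = a ∨ x = b) :
    IsMinimalElem a ∧ IsPrimeElem a ∧ ∀ x : A, x ≠ 0 → x ≠ a → x ≠ b → a < x := by
  refine ⟨⟨ha0, ?_⟩, ⟨?_, ?_⟩, ?_⟩
  · -- minimal
    intro y hy hya
    have hyb : y * b = 0 := po_mul_eq_zero_of_le hya hab
    rcases hzd y b hy.ne' hb0 hyb with h | h
    · exact h.symm
    · exact absurd (h ▸ hya) hnba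
  · -- a ≠ 1
    intro h1
    exact hnba (h1 ▸ PoSemiring.le_one_elem b)
  · -- prime
    intro x y hxy
    by_cases hx0 : x = 0
    · exact Or.inl (hx0 ▸ po_zero_le a)
    by_cases hy0 : y = 0
    · exact Or.inr (hy0 ▸ po_zero_le a)
    have h1 : (x * y) * b = 0 := po_mul_eq_zero_of_le hxy hab
    by_cases hxb : x * b = 0
    · rcases hzd x b hx0 hb0 hxb with h | h
      · exact Or.inl (h ▸ le_refl a)
      · exfalso; apply hb0
        calc b = b * b := hbb.symm
          _ = x * b := by rw [h]
          _ = 0 := hxb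
    · have h2 : (x * b) * y = 0 := by
        rw [show (x * b) * y = (x * y) * b by ring]; exact h1
      rcases hzd (x * b) y hxb hy0 h2 with h | h
      · exact absurd (h ▸ po_mul_le_left x b) hnab
      · -- x * b = b, hence b * y = 0
        have hby : y * b = 0 := by
          rw [mul_comm, ← h, show (x * b) * y = (x * b) * y from rfl]; exact h2
        rcases hzd y b hy0 hb0 hby with h' | h'
        · exact Or.inr (h' ▸ le_refl a)
        · exfalso; apply hb0
          calc b = b * b := hbb.symm
            _ = y * b := by rw [h']
            _ = 0 := hby
  · -- a < x for x ∉ {0, a, b}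
    intro x hx0 hxa hxb
    have h1 : (a * x) * b = 0 := by
      rw [show (a * x) * b = (a * b) * x by ring, hab, zero_mul]
    by_cases hax : a * x = 0
    · rcases hzd x a hx0 ha0 (by rw [mul_comm]; exact hax) with h | h
      · exact absurd h hxa
      · exact absurd h hxb
    · rcases hzd (a * x) b hax hb0 h1 with h | h
      · have : a ≤ x := h ▸ po_mul_le_left a x
        exact this.lt_of_ne (Ne.symm hxa)
      · exact absurd (h ▸ po_mul_le_right a x) hnba

theorem structure_of_two_zero_divisors {A : Type*} [PoSemiring A] [Nontrivial A]
    (c u : A) (hcu : c ≠ u) (hZ : zdSet A = {c, u}) :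
    ((¬ c ≤ u ∧ ¬ u ≤ c) →
      c * c = c ∧ u * u = u ∧ c * u = 0 ∧
      IsMinimalElem c ∧ IsMinimalElem u ∧ IsPrimeElem c ∧ IsPrimeElem u ∧
      (∀ x : A, x ≠ 0 → x ≠ c → x ≠ u → c < x ∧ u < x)) ∧
    (c < u →
      c * c = 0 ∧ (∀ x : A, x ≠ 0 → c ≤ x) ∧ (∀ x : A, x ≠ 0 → x ≠ c → c < x) ∧
      IsPrimeElem u ∧
      (∀ p : A, IsPrimeElem p → p ≠ c → p ≠ u → u < p)) := by
  have hmem : ∀ a : A, (a ≠ 0 ∧ ∃ b : A, b ≠ 0 ∧ a * b = 0) ↔ (a = c ∨ a = u) := by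
    intro a
    have := Set.ext_iff.mp hZ a
    simpa [zdSet, Set.mem_insert_iff, Set.mem_singleton_iff] using this
  have hc := (hmem c).mpr (Or.inl rfl)
  have hu := (hmem u).mpr (Or.inr rfl)
  have hc0 : c ≠ 0 := hc.1
  have hu0 : u ≠ 0 := hu.1
  have hzd : ∀ a b : A, a ≠ 0 → b ≠ 0 → a * b = 0 → a = c ∨ a = u :=
    fun a b ha hb h => (hmem a).mp ⟨ha, b, hb, h⟩
  constructor
  · -- incomparable case
    rintro ⟨hncu, hnuc⟩
    -- c * u = 0
    have hcu0 : c * u = 0 := by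
      obtain ⟨-, b, hb0, hcb⟩ := hc
      rcases hzd b c hb0 hc0 (by rw [mul_comm]; exact hcb) with hb | hb
      · -- b = c, so c * c = 0
        have hcc0 : c * c = 0 := hb ▸ hcb
        by_contra h
        have h1 : (c * u) * c = 0 := by
          rw [show (c * u) * c = (c * c) * u by ring, hcc0, zero_mul]
        rcases hzd (c * u) c h hc0 h1 with h' | h'
        · exact hncu (h' ▸ po_mul_le_left c u)
        · exact hnuc (h' ▸ po_mul_le_right c u)
      · exact hb ▸ hcb
    -- c * c = c
    have hcc : c * c = c := by
      by_cases h : c * c = 0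
      · exfalso
        have hs0 : (c + u) * c = 0 := by
          rw [add_mul, h, mul_comm u c, hcu0, add_zero]
        have hsne : c + u ≠ 0 := fun hs => hc0 (po_eq_zero_of_le_zero (hs ▸ po_le_add_self c u))
        rcases hzd (c + u) c hsne hc0 hs0 with h' | h'
        · exact hnuc (h' ▸ (by rw [add_comm]; exact po_le_add_self u c))
        · exact hncu (h' ▸ po_le_add_self c u)
      · have h1 : (c * c) * u = 0 := by
          rw [show (c * c) * u = (c * u) * c by ring, hcu0, zero_mul]
        rcases hzd (c * c) u h hu0 h1 with h' | h'
        · exact h'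
        · exact absurd (h' ▸ po_mul_le_right c c) hnuc
    -- u * u = u
    have huu : u * u = u := by
      by_cases h : u * u = 0
      · exfalso
        have hs0 : (c + u) * u = 0 := by rw [add_mul, h, hcu0, add_zero]
        have hsne : c + u ≠ 0 := fun hs => hc0 (po_eq_zero_of_le_zero (hs ▸ po_le_add_self c u))
        rcases hzd (c + u) u hsne hu0 hs0 with h' | h'
        · exact hnuc (h' ▸ (by rw [add_comm]; exact po_le_add_self u c))
        · exact hncu (h' ▸ po_le_add_self c u)
      · have h1 : (u * u) * c = 0 := by
          rw [show (u * u) * c = (c * u) * u by ring, hcu0, zero_mul]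
        rcases hzd (u * u) c h hc0 h1 with h' | h'
        · exact absurd (h' ▸ po_mul_le_right u u) hncu
        · exact h'
    obtain ⟨hminc, hprimec, hltc⟩ := part1_aux c u hc0 hu0 hcc huu hcu0 hncu hnuc hzd
    obtain ⟨hminu, hprimeu, hltu⟩ := part1_aux u c hu0 hc0 huu hcc (by rw [mul_comm]; exact hcu0)
      hnuc hncu (fun x y hx hy h => (hzd x y hx hy h).symm)
    exact ⟨hcc, huu, hcu0, hminc, hminu, hprimec, hprimeu,
      fun x hx0 hxc hxu => ⟨hltc x hx0 hxc hxu, hltu x hx0 hxu hxc⟩⟩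
  · -- c < u case
    intro hlt
    have hle : c ≤ u := hlt.le
    -- c * u = 0
    have hcu0 : c * u = 0 := by
      obtain ⟨-, b, hb0, hub⟩ := hu
      rcases hzd b u hb0 hu0 (by rw [mul_comm]; exact hub) with hb | hb
      · rw [mul_comm]; exact hb ▸ hub
      · exact po_mul_eq_zero_of_le hle (hb ▸ hub)
    -- c * c = 0
    have hcc0 : c * c = 0 := po_mul_eq_zero_of_le hle (by rw [mul_comm]; exact hcu0)
    -- c least nonzero
    have hleast : ∀ x : A, x ≠ 0 → c ≤ x := by
      intro x hx0
      by_cases hcx : c * x = 0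
      · rcases hzd x c hx0 hc0 (by rw [mul_comm]; exact hcx) with h | h
        · exact h ▸ le_refl c
        · exact h ▸ hle
      · have h1 : (c * x) * u = 0 := by
          rw [show (c * x) * u = (c * u) * x by ring, hcu0, zero_mul]
        rcases hzd (c * x) u hcx hu0 h1 with h | h
        · exact h ▸ po_mul_le_left c x
        · exfalso
          exact hcu (le_antisymm hle (h ▸ po_mul_le_right c x))
    have hstrict : ∀ x : A, x ≠ 0 → x ≠ c → c < x :=
      fun x hx0 hxc => (hleast x hx0).lt_of_ne (Ne.symm hxc)
    -- u prime
    have hprimeu : IsPrimeElem u := by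
      refine ⟨?_, ?_⟩
      · intro h1
        exact hc0 (by rw [← mul_one c, ← h1]; exact hcu0)
      · intro x y hxy
        by_contra hcon
        push_neg at hcon
        obtain ⟨hxu, hyu⟩ := hcon
        have hx0 : x ≠ 0 := fun h => hxu (h ▸ po_zero_le u)
        have hy0 : y ≠ 0 := fun h => hyu (h ▸ po_zero_le u)
        have hxc : x * c ≠ 0 := by
          intro h
          rcases hzd x c hx0 hc0 h with h' | h'
          · exact hxu (h' ▸ hle)
          · exact hxu (h' ▸ le_refl u)
        have h1 : (x * y) * c = 0 := po_mul_eq_zero_of_le hxy (by rw [mul_comm]; exact hcu0)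
        have h2 : (x * c) * y = 0 := by
          rw [show (x * c) * y = (x * y) * c by ring]; exact h1
        rcases hzd (x * c) y hxc hy0 h2 with h | h
        · -- x * c = c, so c * y = 0
          have hcy : y * c = 0 := by rw [mul_comm, ← h]; exact h2
          rcases hzd y c hy0 hc0 hcy with h' | h'
          · exact hyu (h' ▸ hle)
          · exact hyu (h' ▸ le_refl u)
        · exact hcu (le_antisymm hle (h ▸ po_mul_le_left x c))
    refine ⟨hcc0, hleast, hstrict, hprimeu, ?_⟩
    -- primes above u
    intro p hp hpc hpu
    have hp0 : p ≠ 0 := by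
      rintro rfl
      obtain ⟨-, b, hb0, hcb⟩ := hc
      rcases hp.2 c b (le_of_eq hcb) with h | h
      · exact hc0 (po_eq_zero_of_le_zero h)
      · exact hb0 (po_eq_zero_of_le_zero h)
    have hup : u ≤ p := by
      by_cases huu0 : u * u = 0
      · rcases hp.2 u u (by rw [huu0]; exact po_zero_le p) with h | h <;> exact h
      · have hup0 : u * p ≠ 0 := by
          intro h
          rcases hzd p u hp0 hu0 (by rw [mul_comm]; exact h) with h' | h'
          · exact hpc h'
          · exact hpu h'
        have h1 : (u * p) * c = 0 := by
          rw [show (u * p) * c = (c * u) * p by ring, hcu0, zero_mul]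
        rcases hzd (u * p) c hup0 hc0 h1 with h | h
        · -- u * p = c, so (u*u)*p = u*c = 0, contradicting p not a zero divisor
          exfalso
          have h2 : p * (u * u) = 0 := by
            rw [show p * (u * u) = u * (u * p) by ring, h, mul_comm, hcu0]
          rcases hzd p (u * u) hp0 huu0 h2 with h' | h'
          · exact hpc h'
          · exact hpu h'
        · exact h ▸ po_mul_le_left u p
    exact hup.lt_of_ne (Ne.symm hpu)
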